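/- arXiv:1903.05351 — 2 statements merged into one kernel-verified Lean document; each statement's English description precedes it below -/
import Mathlib

section
/- Let n, m, t be positive integers with t ≤ n, and let f = (f₁,…,f_m) : 𝔽₂ⁿ → 𝔽₂^m be a multi-output Boolean function. Then f is a t-th order correlation-immune function if and only if for every nonzero v ∈ 𝔽₂^m and every permutation π of {1,…,n}, ℱ_{π·(v·f)}(2^{n−t}) = ∑_{k=0}^{2ⁿ−1} (−1)^{(π·(v·f))(k)} ξ^{−k·2^{n−t}} = 0, where v·f = ∑_{i=1}^m v_i f_i (mod 2) is the component Boolean function determined by v, (π·g)(x₁,…,x_n) = g(x_{π(1)},…,x_{π(n)}), ξ = exp(2π√−1/2ⁿ), and g(k) means g evaluated at the binary expansion of k with k = ∑_j x_j 2^{j−1}. -/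
noncomputable section

open Finset

/-- Inner product modulo 2 on `𝔽₂ⁿ`. -/
def dotp {n : ℕ} (c x : Fin n → ZMod 2) : ZMod 2 := ∑ j, c j * x j

/-- Hamming weight of a vector in `𝔽₂ⁿ`. -/
def wt {n : ℕ} (c : Fin n → ZMod 2) : ℕ := (Finset.univ.filter fun j => c j ≠ 0).card

/-- `f` is `t`-th order correlation-immune: fixing any `t` coordinates does not
change the output distribution (counting form). -/
def CI {n : ℕ} {A : Type*} (t : ℕ) (f : (Fin n → ZMod 2) → A) : Prop :=
  ∀ S : Finset (Fin n), S.card = t → ∀ a : Fin n → ZMod 2, ∀ α : A,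
    2 ^ t * Nat.card {x : Fin n → ZMod 2 // f x = α ∧ ∀ j ∈ S, x j = a j}
      = Nat.card {x : Fin n → ZMod 2 // f x = α}

/-- Binary expansion of `k` as a vector in `𝔽₂ⁿ`, `k = ∑ x_j 2^j`. -/
def bin (n k : ℕ) : Fin n → ZMod 2 := fun j => ((k / 2 ^ (j : ℕ)) % 2 : ℕ)

/-- `ω i = exp(2π√-1 / 2^i)`, a primitive `2^i`-th root of unity in `ℂ`. -/
def ω (i : ℕ) : ℂ := Complex.exp (2 * Real.pi * Complex.I / 2 ^ i)

/-!
Fix `v` and put `g = v ⬝ᵥ f`. Since `ξ^{-k 2^{n-t}} = ζ^k` for the primitive `2^t`-th root of unity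
`ζ = (ω t)⁻¹`, this factor only depends on the lowest `t` bits `w` of `k`, so the Fourier value
is `∑_w E(w) ζ^w`, where `E(w)` is the sum of `(-1)^g` over the subcube of inputs whose coordinates
`π⁻¹ 0, …, π⁻¹ (t-1)` read `w`. Because `ζ^{2^{t-1}} = -1` and `1, ζ, …, ζ^{2^{t-1}-1}` are
linearly independent over `ℚ` (the minimal polynomial of `ζ` is the cyclotomic polynomial of
degree `φ(2^t) = 2^{t-1}`), this vanishes iff `E` is unchanged by flipping the top bit of `w`.
As `π` varies this says that `E` is constant along every coordinate of every `t`-subcube, i.e.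
`2^t E = ∑_x (-1)^{g x}` for all subcubes. Walsh inversion over the outputs `𝔽₂^m` turns these
identities, for all `v`, into the counting identities defining correlation immunity; the excluded
`v = 0` costs nothing, since then the Fourier value is a full geometric sum of `ζ ≠ 1`.
-/

def sgn (b : ZMod 2) : ℤ := (-1) ^ b.val

lemma sgn_add (a b : ZMod 2) : sgn (a + b) = sgn a * sgn b := by
  revert a b; decide

lemma sgn_sub (a b : ZMod 2) : sgn (a - b) = sgn a * sgn b := by
  revert a b; decide

section walsh

variable {ι : Type*} [Fintype ι] [DecidableEq ι]

lemma sum_sgn_dotProduct (c : ι → ZMod 2) :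
    ∑ v : ι → ZMod 2, sgn (v ⬝ᵥ c) = if c = 0 then 2 ^ Fintype.card ι else 0 := by
  split_ifs with hc
  · simp [hc, sgn]
  obtain ⟨i, hi⟩ := Function.ne_iff.mp hc
  have hci : sgn (c i) = -1 := (by decide : ∀ b : ZMod 2, b ≠ 0 → sgn b = -1) _ hi
  have hneg : ∑ v, sgn (v ⬝ᵥ c) = -∑ v, sgn (v ⬝ᵥ c) := calc
    ∑ v, sgn (v ⬝ᵥ c) = ∑ v, sgn ((v + Pi.single i 1) ⬝ᵥ c) :=
      (Equiv.sum_comp (Equiv.addRight (Pi.single i 1)) fun v => sgn (v ⬝ᵥ c)).symm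
    _ = -∑ v, sgn (v ⬝ᵥ c) := by
      simp only [add_dotProduct, single_dotProduct, one_mul, sgn_add, hci, mul_neg_one,
        Finset.sum_neg_distrib]
  linarith

def walsh (N : (ι → ZMod 2) → ℤ) (v : ι → ZMod 2) : ℤ :=
  ∑ α, sgn (v ⬝ᵥ α) * N α

lemma walsh_walsh (N : (ι → ZMod 2) → ℤ) (β : ι → ZMod 2) :
    walsh (walsh N) β = 2 ^ Fintype.card ι * N β := by
  have hsgn : ∀ v α, sgn (β ⬝ᵥ v) * sgn (v ⬝ᵥ α) = sgn (v ⬝ᵥ (α - β)) := fun v α => by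
    rw [dotProduct_sub, sgn_sub, dotProduct_comm β, mul_comm]
  simp only [walsh, Finset.mul_sum, ← mul_assoc, hsgn]
  rw [Finset.sum_comm]
  simp only [← Finset.sum_mul, sum_sgn_dotProduct, sub_eq_zero, ite_mul, zero_mul]
  simp

lemma walsh_injective : Function.Injective (walsh (ι := ι)) := by
  intro N M h
  funext β
  have := congrFun (congrArg walsh h) β
  rw [walsh_walsh, walsh_walsh] at this
  exact mul_left_cancel₀ (by positivity) this

lemma walsh_const_mul (a : ℤ) (N : (ι → ZMod 2) → ℤ) :
    walsh (fun α => a * N α) = fun v => a * walsh N v := by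
  funext v
  simp only [walsh, Finset.mul_sum, mul_left_comm]

lemma walsh_card_fiber {X : Type*} (s : Finset X) (f : X → ι → ZMod 2) (v : ι → ZMod 2) :
    walsh (fun α => #{x ∈ s | f x = α}) v = ∑ x ∈ s, sgn (v ⬝ᵥ f x) := by
  rw [← Finset.sum_fiberwise s f]
  refine Finset.sum_congr rfl fun α _ => ?_
  rw [Finset.sum_congr rfl fun x hx => by rw [(Finset.mem_filter.1 hx).2], Finset.sum_const,
    nsmul_eq_mul, mul_comm]

end walsh

lemma eq_of_forall_apply_update_eq {ι β γ : Type*} [Fintype ι] [DecidableEq ι]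
    {D : (ι → β) → γ} (h : ∀ y j c, D (Function.update y j c) = D y) (y y' : ι → β) :
    D y = D y' := by
  have key : ∀ s : Finset ι, D (s.piecewise y' y) = D y := by
    intro s
    induction s using Finset.induction_on with
    | empty => simp
    | insert j s _ ih => rw [Finset.piecewise_insert, h, ih]
  simpa using (key Finset.univ).symm

lemma two_pow_mul_eq_sum_iff {ι : Type*} [Fintype ι] [DecidableEq ι] (D : (ι → ZMod 2) → ℤ) :
    (∀ y, 2 ^ Fintype.card ι * D y = ∑ y', D y') ↔
      ∀ y j c, D (Function.update y j c) = D y := by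
  refine ⟨fun h y j c => mul_left_cancel₀ (by positivity) ((h _).trans (h y).symm),
    fun h y => ?_⟩
  rw [Finset.sum_congr rfl fun y' _ => eq_of_forall_apply_update_eq h y' y]
  simp

def subcube {n t : ℕ} (σ : Fin t → Fin n) (y : Fin t → ZMod 2) : Finset (Fin n → ZMod 2) :=
  {x | x ∘ σ = y}

section subcube

variable {n t : ℕ}

@[simp] lemma mem_subcube {σ : Fin t → Fin n} {y : Fin t → ZMod 2} {x : Fin n → ZMod 2} :
    x ∈ subcube σ y ↔ x ∘ σ = y := by
  simp [subcube]

lemma sum_sum_subcube {M : Type*} [AddCommMonoid M] (σ : Fin t → Fin n)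
    (G : (Fin n → ZMod 2) → M) : ∑ y, ∑ x ∈ subcube σ y, G x = ∑ x, G x :=
  Finset.sum_fiberwise _ _ _

lemma subcube_comp_perm (σ : Fin t → Fin n) (τ : Equiv.Perm (Fin t)) (y : Fin t → ZMod 2) :
    subcube (σ ∘ τ) (y ∘ τ) = subcube σ y := by
  ext x
  simp only [mem_subcube, ← Function.comp_assoc]
  exact τ.surjective.injective_comp_right.eq_iff

lemma sum_subcube_comp_perm {M : Type*} [AddCommMonoid M] (G : (Fin n → ZMod 2) → M)
    (π : Equiv.Perm (Fin n)) (σ : Fin t → Fin n) (y : Fin t → ZMod 2) :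
    ∑ x ∈ subcube σ y, G (x ∘ π) = ∑ x ∈ subcube (π.symm ∘ σ) y, G x := by
  refine Finset.sum_equiv (π.symm.arrowCongr (Equiv.refl _)) (fun x => ?_) fun _ _ => rfl
  rw [mem_subcube, mem_subcube]
  change x ∘ σ = y ↔ (x ∘ π) ∘ π.symm ∘ σ = y
  rw [← Function.comp_assoc, Function.comp_assoc x, π.self_comp_symm, Function.comp_id]

lemma two_pow_mul_sum_subcube_eq_iff (σ : Fin t → Fin n) (G : (Fin n → ZMod 2) → ℤ) :
    (∀ y, 2 ^ t * ∑ x ∈ subcube σ y, G x = ∑ x, G x) ↔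
      ∀ y j c, ∑ x ∈ subcube σ (Function.update y j c), G x = ∑ x ∈ subcube σ y, G x := by
  have := two_pow_mul_eq_sum_iff fun y => ∑ x ∈ subcube σ y, G x
  rwa [Fintype.card_fin, sum_sum_subcube] at this

lemma CI_iff_forall_subcube {A : Type*} [DecidableEq A] (f : (Fin n → ZMod 2) → A) :
    CI t f ↔ ∀ σ : Fin t → Fin n, σ.Injective → ∀ y α,
      2 ^ t * #{x ∈ subcube σ y | f x = α} = #{x | f x = α} := by
  have hcard : ∀ (σ : Fin t → Fin n) (a : Fin n → ZMod 2) α,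
      Nat.card {x // f x = α ∧ ∀ j ∈ Finset.univ.image σ, x j = a j} =
        #{x ∈ subcube σ (a ∘ σ) | f x = α} := by
    intro σ a α
    rw [Nat.card_eq_fintype_card, Fintype.card_subtype, subcube, Finset.filter_filter]
    congr 1
    ext x
    simp [funext_iff, and_comm]
  have hcard_univ : ∀ α, Nat.card {x // f x = α} = #{x | f x = α} := fun α => by
    rw [Nat.card_eq_fintype_card, Fintype.card_subtype]
  refine ⟨fun h σ hσ y α => ?_, fun h S hS a α => ?_⟩
  · have := h (Finset.univ.image σ) (by simp [Finset.card_image_of_injective _ hσ])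
      (Function.extend σ y 0) α
    rwa [hcard, Function.extend_comp hσ, hcard_univ] at this
  · have := h (S.orderEmbOfFin hS) (S.orderEmbOfFin hS).injective (a ∘ S.orderEmbOfFin hS) α
    rwa [← hcard, Finset.image_orderEmbOfFin_univ, ← hcard_univ] at this

lemma forall_subcube_iff_walsh {m : ℕ} (σ : Fin t → Fin n)
    (f : (Fin n → ZMod 2) → (Fin m → ZMod 2)) :
    (∀ y α, 2 ^ t * #{x ∈ subcube σ y | f x = α} = #{x | f x = α}) ↔
      ∀ v y, 2 ^ t * ∑ x ∈ subcube σ y, sgn (v ⬝ᵥ f x) = ∑ x, sgn (v ⬝ᵥ f x) := by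
  refine (forall_congr' fun y => ?_).trans forall_comm
  calc (∀ α, 2 ^ t * #{x ∈ subcube σ y | f x = α} = #{x | f x = α})
      ↔ (fun α => 2 ^ t * (#{x ∈ subcube σ y | f x = α} : ℤ)) =
          fun α => (#{x | f x = α} : ℤ) := by
        simp only [funext_iff]
        norm_cast
    _ ↔ _ := by
        rw [← walsh_injective.eq_iff, walsh_const_mul, funext_iff]
        simp only [walsh_card_fiber]

end subcube

-- `x ↦ ∑ j, x j * 2 ^ j`
def binEquiv (n : ℕ) : (Fin n → ZMod 2) ≃ Fin (2 ^ n) := finFunctionFinEquiv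

lemma binEquiv_symm_apply_val {n : ℕ} (k : Fin (2 ^ n)) (j : Fin n) :
    ((binEquiv n).symm k j).val = k / 2 ^ (j : ℕ) % 2 :=
  finFunctionFinEquiv_symm_apply_val k j

lemma bin_eq_binEquiv_symm {n k : ℕ} (hk : k < 2 ^ n) :
    bin n k = (binEquiv n).symm ⟨k, hk⟩ := by
  funext j
  apply ZMod.val_injective
  rw [bin, ZMod.val_natCast, binEquiv_symm_apply_val, Nat.mod_mod]

lemma sum_range_bin {n : ℕ} {M : Type*} [AddCommMonoid M] (F : ℕ → (Fin n → ZMod 2) → M) :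
    ∑ k ∈ range (2 ^ n), F k (bin n k) = ∑ x, F (binEquiv n x) x := by
  rw [Finset.sum_range]
  refine Fintype.sum_equiv (binEquiv n).symm _ _ fun k => ?_
  rw [bin_eq_binEquiv_symm k.isLt, Equiv.apply_symm_apply]

lemma Nat.mod_pow_div_pow_mod {m j t : ℕ} (a : ℕ) (h : j < t) :
    a % m ^ t / m ^ j % m = a / m ^ j % m := by
  rw [← Nat.add_sub_cancel' h.le, pow_add, Nat.mod_mul_right_div_self,
    Nat.mod_mod_of_dvd _ (dvd_pow_self m (Nat.sub_ne_zero_of_lt h))]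

lemma binEquiv_comp_castLE {n t : ℕ} (htn : t ≤ n) (x : Fin n → ZMod 2) :
    (binEquiv t (x ∘ Fin.castLE htn) : ℕ) = binEquiv n x % 2 ^ t := by
  have hlt : (binEquiv n x : ℕ) % 2 ^ t < 2 ^ t := Nat.mod_lt _ (by positivity)
  suffices x ∘ Fin.castLE htn = (binEquiv t).symm ⟨_, hlt⟩ by
    rw [this, Equiv.apply_symm_apply]
  funext j
  apply ZMod.val_injective
  have hx := binEquiv_symm_apply_val (binEquiv n x) (Fin.castLE htn j)
  rw [Equiv.symm_apply_apply] at hx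
  rw [binEquiv_symm_apply_val, Function.comp_apply, hx, Fin.val_castLE]
  exact (Nat.mod_pow_div_pow_mod _ j.isLt).symm

lemma binEquiv_snoc {t : ℕ} (w : Fin t → ZMod 2) (b : ZMod 2) :
    (binEquiv (t + 1) (Fin.snoc w b) : ℕ) = binEquiv t w + b.val * 2 ^ t := by
  change ∑ i : Fin (t + 1), (Fin.snoc (α := fun _ => ZMod 2) w b i).val * 2 ^ (i : ℕ) =
    ∑ i : Fin t, (w i).val * 2 ^ (i : ℕ) + b.val * 2 ^ t
  simp [Fin.sum_univ_castSucc]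

lemma isPrimitiveRoot_ω (t : ℕ) : IsPrimitiveRoot (ω t) (2 ^ t) := by
  simpa [ω] using Complex.isPrimitiveRoot_exp (2 ^ t) (by positivity)

lemma ω_pow_two_pow_sub {n t : ℕ} (htn : t ≤ n) : ω n ^ 2 ^ (n - t) = ω t := by
  rw [ω, ω, ← Complex.exp_nat_mul]
  congr 1
  rw [← Nat.sub_add_cancel htn]
  push_cast
  rw [Nat.add_sub_cancel, pow_add]
  field_simp

lemma ω_zpow_neg_mul {n t : ℕ} (htn : t ≤ n) (k : ℕ) :
    ω n ^ (-(k * 2 ^ (n - t) : ℤ)) = (ω t)⁻¹ ^ k := by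
  rw [zpow_neg, inv_pow, ← ω_pow_two_pow_sub htn, ← pow_mul, mul_comm]
  norm_cast

lemma IsPrimitiveRoot.eq_zero_of_sum_intCast_mul_pow_eq_zero {K : Type*} [Field K]
    [CharZero K] {ζ : K} {N d : ℕ} (hζ : IsPrimitiveRoot ζ N) (hN : 0 < N) (hd : N.totient = d)
    {c : Fin d → ℤ} (h : ∑ i, (c i : K) * ζ ^ (i : ℕ) = 0) : c = 0 := by
  subst hd
  have hind := linearIndependent_pow (K := ℚ) ζ
  rw [← Polynomial.cyclotomic_eq_minpoly_rat hζ hN, Polynomial.natDegree_cyclotomic] at hind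
  funext i
  exact_mod_cast Fintype.linearIndependent_iff.1 hind (fun i => (c i : ℚ))
    (by simpa [Rat.smul_def] using h) i

lemma IsPrimitiveRoot.pow_two_pow_eq_neg_one {R : Type*} [CommRing R] [NoZeroDivisors R]
    {ζ : R} {t : ℕ} (hζ : IsPrimitiveRoot ζ (2 ^ (t + 1))) : ζ ^ 2 ^ t = -1 := by
  refine IsPrimitiveRoot.eq_neg_one_of_two_right ?_
  simpa [pow_succ] using hζ.pow_of_dvd (by positivity) (pow_dvd_pow 2 t.le_succ)

lemma sum_mul_pow_binEquiv_succ {t : ℕ} {ζ : ℂ} (hζ : ζ ^ 2 ^ t = -1)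
    (D : (Fin (t + 1) → ZMod 2) → ℤ) :
    ∑ w, (D w : ℂ) * ζ ^ (binEquiv _ w : ℕ) =
      ∑ w : Fin t → ZMod 2, ((D (Fin.snoc w 0) - D (Fin.snoc w 1) : ℤ) : ℂ) *
        ζ ^ (binEquiv _ w : ℕ) := by
  rw [← (Fin.snocEquiv fun _ => ZMod 2).sum_comp, Fintype.sum_prod_type_right]
  refine Finset.sum_congr rfl fun w _ => ?_
  have huniv : (Finset.univ : Finset (ZMod 2)) = {0, 1} := rfl
  have hsnoc : ∀ b, (Fin.snocEquiv fun _ => ZMod 2) (b, w) = Fin.snoc w b := fun _ => rfl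
  have hval1 : (1 : ZMod 2).val = 1 := rfl
  rw [huniv, Finset.sum_pair zero_ne_one, hsnoc, hsnoc]
  simp [binEquiv_snoc, pow_add, hval1, hζ]
  ring

lemma sum_mul_pow_binEquiv_eq_zero_iff {t : ℕ} {ζ : ℂ} (hζ : IsPrimitiveRoot ζ (2 ^ (t + 1)))
    (D : (Fin (t + 1) → ZMod 2) → ℤ) :
    ∑ w, (D w : ℂ) * ζ ^ (binEquiv _ w : ℕ) = 0 ↔
      ∀ w c, D (Function.update w (Fin.last t) c) = D w := by
  have htot : (2 ^ (t + 1)).totient = 2 ^ t := by simp [Nat.totient_prime_pow_succ Nat.prime_two]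
  rw [sum_mul_pow_binEquiv_succ hζ.pow_two_pow_eq_neg_one]
  constructor
  · intro h w c
    have hc := hζ.eq_zero_of_sum_intCast_mul_pow_eq_zero (by positivity) htot
      (c := fun i => D (Fin.snoc ((binEquiv t).symm i) 0) - D (Fin.snoc ((binEquiv t).symm i) 1))
      (by rw [← h]; exact Fintype.sum_equiv (binEquiv t).symm _ _ fun i => by simp)
    have hconst : ∀ (w' : Fin t → ZMod 2) b, D (Fin.snoc w' b) = D (Fin.snoc w' 0) := by
      intro w' b
      have := congrFun hc (binEquiv t w')
      rw [Equiv.symm_apply_apply, Pi.zero_apply, sub_eq_zero] at this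
      rcases (by decide : ∀ b : ZMod 2, b = 0 ∨ b = 1) b with rfl | rfl
      · rfl
      · exact this.symm
    rw [← Fin.snoc_init_self w, Fin.update_snoc_last, hconst _ c, hconst _ (w _)]
  · intro h
    refine Finset.sum_eq_zero fun w _ => ?_
    have := h (Fin.snoc w 0) 1
    rw [Fin.update_snoc_last] at this
    simp [this]

lemma sum_range_bin_mul_pow {n t : ℕ} (htn : t ≤ n) {ζ : ℂ} (hζ : ζ ^ 2 ^ t = 1)
    (G : (Fin n → ZMod 2) → ℤ) :
    ∑ k ∈ range (2 ^ n), (G (bin n k) : ℂ) * ζ ^ k =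
      ∑ w, ((∑ x ∈ subcube (Fin.castLE htn) w, G x : ℤ) : ℂ) * ζ ^ (binEquiv t w : ℕ) := by
  rw [sum_range_bin (fun k x => (G x : ℂ) * ζ ^ k), ← sum_sum_subcube (Fin.castLE htn)]
  refine Finset.sum_congr rfl fun w _ => ?_
  rw [Int.cast_sum, Finset.sum_mul]
  refine Finset.sum_congr rfl fun x hx => ?_
  rw [pow_eq_pow_mod _ hζ, ← binEquiv_comp_castLE htn, mem_subcube.1 hx]

lemma fourier_sum_eq {n m t : ℕ} (htn : t ≤ n) (f : (Fin n → ZMod 2) → (Fin m → ZMod 2))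
    (v : Fin m → ZMod 2) (π : Equiv.Perm (Fin n)) :
    ∑ k ∈ range (2 ^ n), (-1 : ℂ) ^ (∑ i, v i * f (fun j => bin n k (π j)) i).val *
        ω n ^ (-(k * 2 ^ (n - t) : ℤ)) =
      ∑ w, ((∑ x ∈ subcube (π.symm ∘ Fin.castLE htn) w, sgn (v ⬝ᵥ f x) : ℤ) : ℂ) *
        (ω t)⁻¹ ^ (binEquiv t w : ℕ) := by
  simp_rw [← sum_subcube_comp_perm]
  rw [← sum_range_bin_mul_pow htn (isPrimitiveRoot_ω t).inv.pow_eq_one]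
  refine Finset.sum_congr rfl fun k _ => ?_
  rw [ω_zpow_neg_mul htn]
  push_cast [sgn]
  rfl

lemma sum_range_ω_zpow_eq_zero {n t : ℕ} (ht : 0 < t) (htn : t ≤ n) :
    ∑ k ∈ range (2 ^ n), ω n ^ (-(k * 2 ^ (n - t) : ℤ)) = 0 := by
  have hζ := (isPrimitiveRoot_ω t).inv
  simp_rw [ω_zpow_neg_mul htn]
  rw [geom_sum_eq (hζ.ne_one (Nat.one_lt_two_pow ht.ne')),
    (hζ.pow_eq_one_iff_dvd _).2 (pow_dvd_pow 2 htn), sub_self, zero_div]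

lemma Function.Injective.exists_perm_comp_eq {ι κ : Type*} [Finite ι] {σ σ' : κ → ι}
    (hσ : σ.Injective) (hσ' : σ'.Injective) : ∃ π : Equiv.Perm ι, π ∘ σ' = σ := by
  classical
  let e := (Equiv.ofInjective σ' hσ').symm.trans (Equiv.ofInjective σ hσ)
  refine ⟨e.extendSubtype, funext fun k => ?_⟩
  rw [Function.comp_apply, Equiv.extendSubtype_apply_of_mem e _ ⟨k, rfl⟩]
  simp [e]

lemma forall_perm_update_last_iff {n t : ℕ} (htn : t + 1 ≤ n) (G : (Fin n → ZMod 2) → ℤ) :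
    (∀ π : Equiv.Perm (Fin n), ∀ w c,
      ∑ x ∈ subcube (π.symm ∘ Fin.castLE htn) (Function.update w (Fin.last t) c), G x =
        ∑ x ∈ subcube (π.symm ∘ Fin.castLE htn) w, G x) ↔
    ∀ σ : Fin (t + 1) → Fin n, σ.Injective → ∀ y j c,
      ∑ x ∈ subcube σ (Function.update y j c), G x = ∑ x ∈ subcube σ y, G x := by
  refine ⟨fun h σ hσ y j c => ?_,
    fun h π w c => h _ (π.symm.injective.comp (Fin.castLE_injective htn)) w _ c⟩
  let τ := Equiv.swap j (Fin.last t)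
  obtain ⟨π, hπ⟩ := (hσ.comp τ.injective).exists_perm_comp_eq (Fin.castLE_injective htn)
  have key := h π.symm (y ∘ τ) c
  have hupdate : Function.update (y ∘ τ) (Fin.last t) c = Function.update y j c ∘ τ := by
    rw [Function.update_comp_equiv, Equiv.symm_swap, Equiv.swap_apply_left]
  rwa [Equiv.symm_symm, hπ, hupdate, subcube_comp_perm, subcube_comp_perm] at key

theorem stmt3_general (n m t : ℕ) (ht : 0 < t) (htn : t ≤ n)
    (f : (Fin n → ZMod 2) → (Fin m → ZMod 2)) :
    CI t f ↔ ∀ v : Fin m → ZMod 2, v ≠ 0 → ∀ π : Equiv.Perm (Fin n),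
      ∑ k ∈ Finset.range (2 ^ n),
        (-1 : ℂ) ^ (∑ i, v i * f (fun j => bin n k (π j)) i).val *
          ω n ^ (-(k * 2 ^ (n - t) : ℤ)) = 0 := by
  obtain ⟨t, rfl⟩ := Nat.exists_eq_add_one_of_ne_zero ht.ne'
  calc CI (t + 1) f ↔ ∀ v : Fin m → ZMod 2, ∀ σ : Fin (t + 1) → Fin n, σ.Injective → ∀ y j c,
        ∑ x ∈ subcube σ (Function.update y j c), sgn (v ⬝ᵥ f x) =
          ∑ x ∈ subcube σ y, sgn (v ⬝ᵥ f x) := by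
        simp only [CI_iff_forall_subcube, forall_subcube_iff_walsh,
          two_pow_mul_sum_subcube_eq_iff]
        exact ⟨fun h v σ hσ => h σ hσ v, fun h σ hσ v => h v σ hσ⟩
    _ ↔ ∀ v : Fin m → ZMod 2, ∀ π : Equiv.Perm (Fin n),
        ∑ k ∈ Finset.range (2 ^ n),
          (-1 : ℂ) ^ (∑ i, v i * f (fun j => bin n k (π j)) i).val *
            ω n ^ (-(k * 2 ^ (n - (t + 1)) : ℤ)) = 0 := by
        simp only [fourier_sum_eq htn, forall_perm_update_last_iff,
          sum_mul_pow_binEquiv_eq_zero_iff (isPrimitiveRoot_ω (t + 1)).inv]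
    _ ↔ _ := by
        refine ⟨fun h v _ => h v, fun h v => ?_⟩
        rcases eq_or_ne v 0 with rfl | hv
        · intro π
          simpa using sum_range_ω_zpow_eq_zero ht htn
        · exact h v hv

/-- A multi-output Boolean function `f : 𝔽₂ⁿ → 𝔽₂^m` is `t`-th order correlation-immune
iff `ℱ_{π·(v·f)}(2^{n-t}) = 0` for all nonzero `v` and all permutations `π`. -/
theorem stmt3 (n m t : ℕ) (hn : 0 < n) (hm : 0 < m) (ht : 0 < t) (htn : t ≤ n)
    (f : (Fin n → ZMod 2) → (Fin m → ZMod 2)) :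
    CI t f ↔ ∀ v : Fin m → ZMod 2, v ≠ 0 → ∀ π : Equiv.Perm (Fin n),
      ∑ k ∈ Finset.range (2 ^ n),
        (-1 : ℂ) ^ (∑ i, v i * f (fun j => bin n k (π j)) i).val *
          ω n ^ (-(k * 2 ^ (n - t) : ℤ)) = 0 :=
  stmt3_general n m t ht htn f
end
end

section
/- Let n, t be positive integers with t ≤ n, and let f : 𝔽₂ⁿ → 𝔽₂ be a Boolean function. Then f is a t-th order correlation-immune function if and only if its Walsh transform vanishes at all points of Hamming weight between 1 and t, i.e., ∑_{x ∈ 𝔽₂ⁿ} (−1)^{f(x) + u·x} = 0 for every u ∈ 𝔽₂ⁿ with 1 ≤ wt(u) ≤ t, where u·x = ∑_j u_j x_j (mod 2) and wt(u) is the Hamming weight of u. -/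
noncomputable section

open Finset

/-! ### Auxiliary machinery for the Golomb–Xiao–Massey theorem -/

open Classical

/-- The character `v ↦ (-1)^v` on `𝔽₂`. -/
def χ (v : ZMod 2) : ℂ := (-1) ^ v.val

lemma chi_zero : χ 0 = 1 := rfl

lemma chi_one : χ 1 = -1 := by
  have : (1 : ZMod 2).val = 1 := rfl
  simp [χ, this]

lemma chi_add (a b : ZMod 2) : χ (a + b) = χ a * χ b := by
  have h : ∀ a b : ZMod 2, (a + b).val % 2 = (a.val + b.val) % 2 := by decide
  have hlt : (a + b).val < 2 := ZMod.val_lt _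
  show (-1 : ℂ) ^ (a + b).val = _
  calc (-1 : ℂ) ^ ((a + b).val) = (-1) ^ ((a + b).val % 2) := by rw [Nat.mod_eq_of_lt hlt]
    _ = (-1) ^ ((a.val + b.val) % 2) := by rw [h]
    _ = (-1 : ℂ) ^ (a.val + b.val) := (neg_one_pow_eq_pow_mod_two _).symm
    _ = χ a * χ b := pow_add _ _ _

lemma chi_sum {ι : Type*} (T : Finset ι) (g : ι → ZMod 2) :
    χ (∑ j ∈ T, g j) = ∏ j ∈ T, χ (g j) := by
  induction T using Finset.cons_induction with
  | empty => simp [chi_zero]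
  | cons j T hj ih => rw [Finset.sum_cons, Finset.prod_cons, chi_add, ih]

lemma chi_eq (b c : ZMod 2) : 1 + χ (b + c) = if b = c then 2 else 0 := by
  by_cases h : b = c
  · subst h
    rw [CharTwo.add_self_eq_zero, chi_zero, if_pos rfl]
    norm_num
  · have h1 : b + c = 1 := by revert h; revert b c; decide
    rw [h1, chi_one, if_neg h]
    ring

/-- Indicator vector of a subset of coordinates. -/
def cT {n : ℕ} (T : Finset (Fin n)) : Fin n → ZMod 2 := fun j => if j ∈ T then 1 else 0

lemma dotp_cT {n : ℕ} (T : Finset (Fin n)) (x : Fin n → ZMod 2) :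
    dotp (cT T) x = ∑ j ∈ T, x j := by
  unfold dotp cT
  simp [ite_mul]

lemma dotp_add_left {n : ℕ} (u v x : Fin n → ZMod 2) :
    dotp (u + v) x = dotp u x + dotp v x := by
  unfold dotp; rw [← Finset.sum_add_distrib]; exact Finset.sum_congr rfl fun j _ => by
    simp [add_mul]

lemma dotp_add_right {n : ℕ} (u x y : Fin n → ZMod 2) :
    dotp u (x + y) = dotp u x + dotp u y := by
  unfold dotp; rw [← Finset.sum_add_distrib]; exact Finset.sum_congr rfl fun j _ => by
    simp [mul_add]

lemma dotp_single {n : ℕ} (v : Fin n → ZMod 2) (j0 : Fin n) :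
    dotp v (Pi.single j0 1) = v j0 := by
  unfold dotp
  rw [Finset.sum_eq_single j0]
  · simp
  · intro b _ hb; simp [Pi.single_eq_of_ne hb]
  · simp

lemma wt_cT {n : ℕ} (T : Finset (Fin n)) : wt (cT T) = T.card := by
  unfold wt cT
  congr 1
  ext j
  by_cases h : j ∈ T <;> simp [h]

lemma cT_ne_zero {n : ℕ} {T : Finset (Fin n)} (h : T.Nonempty) : cT T ≠ 0 := by
  obtain ⟨j, hj⟩ := h
  intro hc
  have := congrFun hc j
  simp [cT, hj] at this

lemma cT_inj {n : ℕ} {T T' : Finset (Fin n)} (h : cT T = cT T') : T = T' := by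
  ext j
  have := congrFun h j
  by_cases hT : j ∈ T <;> by_cases hT' : j ∈ T' <;> simp_all [cT]

/-- Orthogonality of characters on `𝔽₂ⁿ`. -/
lemma orth {n : ℕ} (v : Fin n → ZMod 2) :
    ∑ a : Fin n → ZMod 2, χ (dotp v a) = if v = 0 then (2 : ℂ) ^ n else 0 := by
  by_cases hv : v = 0
  · subst hv
    have h0 : ∀ a : Fin n → ZMod 2, dotp 0 a = 0 := by intro a; simp [dotp]
    simp only [h0, if_pos rfl]
    show ∑ _a : Fin n → ZMod 2, (1 : ℂ) = _
    rw [Finset.sum_const, Finset.card_univ]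
    simp [Fintype.card_fun]
  · rw [if_neg hv]
    obtain ⟨j0, hj0⟩ : ∃ j, v j ≠ 0 := by
      by_contra h; push_neg at h; exact hv (funext fun j => h j)
    have hv1 : v j0 = 1 := by revert hj0; generalize v j0 = w; revert w; decide
    set g : Fin n → ZMod 2 := Pi.single j0 1 with hg
    have key : ∑ a : Fin n → ZMod 2, χ (dotp v a)
        = ∑ a : Fin n → ZMod 2, χ (dotp v (g + a)) :=
      (Fintype.sum_equiv (Equiv.addLeft g) _ _ (fun a => rfl)).symm
    have : ∀ a, χ (dotp v (g + a)) = - χ (dotp v a) := by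
      intro a
      rw [dotp_add_right, chi_add, hg, dotp_single, hv1, chi_one]
      ring
    simp only [this] at key
    rw [Finset.sum_neg_distrib] at key
    have h2 : (2:ℂ) * ∑ a : Fin n → ZMod 2, χ (dotp v a) = 0 := by
      rw [two_mul]; nth_rewrite 1 [key]; ring
    have := mul_eq_zero.mp h2
    simpa using this

lemma count_eq {n : ℕ} (P : (Fin n → ZMod 2) → Prop) [DecidablePred P] :
    (Nat.card {x : Fin n → ZMod 2 // P x} : ℂ)
      = ∑ x : Fin n → ZMod 2, if P x then 1 else 0 := by
  rw [Nat.card_eq_fintype_card, Fintype.card_subtype]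
  rw [Finset.sum_ite, Finset.sum_const, Finset.sum_const]
  simp

/-- The Walsh transform of `f` at `v`. -/
def Wf {n : ℕ} (f : (Fin n → ZMod 2) → ZMod 2) (v : Fin n → ZMod 2) : ℂ :=
  ∑ x : Fin n → ZMod 2, χ (f x + dotp v x)

lemma secondary {n : ℕ} (f : (Fin n → ZMod 2) → ZMod 2) (α : ZMod 2) :
    (2 : ℂ) * (Nat.card {x : Fin n → ZMod 2 // f x = α} : ℂ)
      = 2 ^ n + χ α * Wf f 0 := by
  rw [count_eq, Finset.mul_sum]
  have h1 : ∀ x : Fin n → ZMod 2, (2:ℂ) * (if f x = α then 1 else 0)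
      = 1 + χ (f x + α) := by
    intro x; rw [chi_eq]; by_cases h : f x = α <;> simp [h]
  rw [Finset.sum_congr rfl fun x _ => h1 x, Finset.sum_add_distrib]
  congr 1
  · rw [Finset.sum_const, Finset.card_univ]
    simp
  · unfold Wf
    rw [Finset.mul_sum]
    refine Finset.sum_congr rfl fun x _ => ?_
    have : dotp 0 x = 0 := by simp [dotp]
    rw [this, add_zero, chi_add, mul_comm]

set_option linter.unnecessarySeqFocus false in
lemma master {n : ℕ} (f : (Fin n → ZMod 2) → ZMod 2) (S : Finset (Fin n))
    (a : Fin n → ZMod 2) (α : ZMod 2) :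
    (2 : ℂ) ^ (S.card + 1)
        * (Nat.card {x : Fin n → ZMod 2 // f x = α ∧ ∀ j ∈ S, x j = a j} : ℂ)
      = 2 ^ n + χ α * ∑ T ∈ S.powerset, χ (∑ j ∈ T, a j) * Wf f (cT T) := by
  have hprod : ∀ x : Fin n → ZMod 2,
      ∏ j ∈ S, (1 + χ (x j + a j))
        = if (∀ j ∈ S, x j = a j) then (2:ℂ) ^ S.card else 0 := by
    intro x
    rw [Finset.prod_congr rfl fun j _ => chi_eq (x j) (a j)]
    by_cases h : ∀ j ∈ S, x j = a j
    · rw [if_pos h, Finset.prod_congr rfl fun j hj => if_pos (h j hj)]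
      simp
    · rw [if_neg h]
      push_neg at h
      obtain ⟨j, hj, hne⟩ := h
      exact Finset.prod_eq_zero hj (if_neg hne)
  have hpoint : ∀ x : Fin n → ZMod 2,
      (1 + χ (f x + α)) * ∏ j ∈ S, (1 + χ (x j + a j))
        = if (f x = α ∧ ∀ j ∈ S, x j = a j) then (2:ℂ) ^ (S.card + 1) else 0 := by
    intro x
    rw [chi_eq (f x) α, hprod]
    by_cases h1 : f x = α <;> by_cases h2 : ∀ j ∈ S, x j = a j <;>
      simp [h1, h2, pow_succ] <;> try ring
  have hLHS : (2 : ℂ) ^ (S.card + 1)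
        * (Nat.card {x : Fin n → ZMod 2 // f x = α ∧ ∀ j ∈ S, x j = a j} : ℂ)
      = ∑ x : Fin n → ZMod 2, (1 + χ (f x + α)) * ∏ j ∈ S, (1 + χ (x j + a j)) := by
    rw [count_eq, Finset.mul_sum]
    refine Finset.sum_congr rfl fun x _ => ?_
    rw [hpoint x]
    by_cases h : f x = α ∧ ∀ j ∈ S, x j = a j <;> simp [h]
  rw [hLHS]
  have hexp : ∀ x : Fin n → ZMod 2,
      ∏ j ∈ S, (1 + χ (x j + a j))
        = ∑ T ∈ S.powerset, χ (∑ j ∈ T, a j) * χ (dotp (cT T) x) := by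
    intro x
    calc ∏ j ∈ S, (1 + χ (x j + a j)) = ∏ j ∈ S, (χ (x j + a j) + 1) := by
          exact Finset.prod_congr rfl fun j _ => add_comm _ _
      _ = ∑ T ∈ S.powerset, (∏ j ∈ T, χ (x j + a j)) * ∏ j ∈ S \ T, (1:ℂ) :=
          Finset.prod_add _ _ _
      _ = ∑ T ∈ S.powerset, χ (∑ j ∈ T, a j) * χ (dotp (cT T) x) := by
          refine Finset.sum_congr rfl fun T _ => ?_
          rw [Finset.prod_const_one, mul_one, ← chi_sum, Finset.sum_add_distrib,
            chi_add, dotp_cT, mul_comm]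
  rw [Finset.sum_congr rfl fun x _ => by rw [hexp x, Finset.mul_sum]]
  rw [Finset.sum_comm]
  have hinner : ∀ T ∈ S.powerset,
      ∑ x : Fin n → ZMod 2, (1 + χ (f x + α)) * (χ (∑ j ∈ T, a j) * χ (dotp (cT T) x))
        = χ (∑ j ∈ T, a j) * ((if cT T = 0 then (2:ℂ)^n else 0) + χ α * Wf f (cT T)) := by
    intro T _
    rw [← orth (cT T)]
    unfold Wf
    rw [mul_add, Finset.mul_sum, Finset.mul_sum, Finset.mul_sum, ← Finset.sum_add_distrib]
    refine Finset.sum_congr rfl fun x _ => ?_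
    rw [chi_add (f x) α, chi_add (f x) (dotp (cT T) x)]
    ring
  rw [Finset.sum_congr rfl hinner]
  have hsplit : ∑ T ∈ S.powerset,
      χ (∑ j ∈ T, a j) * ((if cT T = 0 then (2:ℂ)^n else 0) + χ α * Wf f (cT T))
      = (∑ T ∈ S.powerset, χ (∑ j ∈ T, a j) * (if cT T = 0 then (2:ℂ)^n else 0))
        + χ α * ∑ T ∈ S.powerset, χ (∑ j ∈ T, a j) * Wf f (cT T) := by
    rw [Finset.mul_sum, ← Finset.sum_add_distrib]
    refine Finset.sum_congr rfl fun T _ => by ring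
  rw [hsplit]
  congr 1
  rw [Finset.sum_eq_single_of_mem (∅ : Finset (Fin n)) (Finset.empty_mem_powerset S)]
  · have h0 : cT (∅ : Finset (Fin n)) = 0 := funext fun j => by simp [cT]
    simp [h0, chi_zero]
  · intro T _ hT
    rw [if_neg (cT_ne_zero (Finset.nonempty_of_ne_empty hT)), mul_zero]

/-- Golomb–Xiao–Massey characterization: a Boolean function `f : 𝔽₂ⁿ → 𝔽₂` is
`t`-th order correlation-immune iff its Walsh transform vanishes at every point of
Hamming weight between `1` and `t`. -/
theorem stmt14 (n t : ℕ) (hn : 0 < n) (ht : 0 < t) (htn : t ≤ n)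
    (f : (Fin n → ZMod 2) → ZMod 2) :
    CI t f ↔ ∀ u : Fin n → ZMod 2, 1 ≤ wt u → wt u ≤ t →
      ∑ x : Fin n → ZMod 2, (-1 : ℂ) ^ (f x + dotp u x).val = 0 := by
  have hWf : ∀ u : Fin n → ZMod 2,
      Wf f u = ∑ x : Fin n → ZMod 2, (-1 : ℂ) ^ (f x + dotp u x).val := fun u => rfl
  constructor
  · -- CI → Walsh vanishing
    intro hCI u h1 h2
    rw [← hWf]
    set T0 : Finset (Fin n) := Finset.univ.filter (fun j => u j ≠ 0) with hT0
    have hT0card : T0.card = wt u := rfl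
    have hT0ne : T0.Nonempty := Finset.card_pos.mp (by omega)
    have hcard : T0.card ≤ t := by omega
    obtain ⟨S, hT0S, -, hScard⟩ := Finset.exists_subsuperset_card_eq
      (Finset.subset_univ T0) (by simpa [hT0card] using h2) (by simp [htn])
    have hcTu : cT T0 = u := by
      funext j
      by_cases h : u j = 0
      · simp [cT, hT0, h]
      · have h1 : u j = 1 := by revert h; generalize u j = w; revert w; decide
        simp [cT, hT0, h, h1]
    have key : ∀ a : Fin n → ZMod 2,
        ∑ T ∈ S.powerset, χ (∑ j ∈ T, a j) * Wf f (cT T) = Wf f 0 := by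
      intro a
      have hm := master f S a 0
      have hc := hCI S hScard a 0
      have hcC : (2 : ℂ) ^ t *
          (Nat.card {x : Fin n → ZMod 2 // f x = 0 ∧ ∀ j ∈ S, x j = a j} : ℂ)
          = (Nat.card {x : Fin n → ZMod 2 // f x = 0} : ℂ) := by
        exact_mod_cast congrArg (Nat.cast : ℕ → ℂ) hc
      have hs := secondary f 0
      rw [hScard, pow_succ, mul_comm ((2:ℂ)^t) 2, mul_assoc, hcC, hs, chi_zero,
        one_mul, one_mul] at hm
      exact (add_left_cancel hm).symm
    have hsum : ∑ a : Fin n → ZMod 2,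
        χ (∑ j ∈ T0, a j) * ∑ T ∈ S.powerset, χ (∑ j ∈ T, a j) * Wf f (cT T)
        = ∑ a : Fin n → ZMod 2, χ (∑ j ∈ T0, a j) * Wf f 0 :=
      Finset.sum_congr rfl fun a _ => by rw [key a]
    have hRHS : ∑ a : Fin n → ZMod 2, χ (∑ j ∈ T0, a j) * Wf f 0 = 0 := by
      rw [← Finset.sum_mul]
      rw [Finset.sum_congr rfl fun a _ => by rw [← dotp_cT T0 a]]
      rw [orth, if_neg (cT_ne_zero hT0ne), zero_mul]
    have hLHS : ∑ a : Fin n → ZMod 2,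
        χ (∑ j ∈ T0, a j) * ∑ T ∈ S.powerset, χ (∑ j ∈ T, a j) * Wf f (cT T)
        = (2:ℂ)^n * Wf f (cT T0) := by
      rw [Finset.sum_congr rfl fun (a : Fin n → ZMod 2) _ => Finset.mul_sum _ _ _]
      rw [Finset.sum_comm]
      have hterm : ∀ T ∈ S.powerset,
          ∑ a : Fin n → ZMod 2, χ (∑ j ∈ T0, a j) * (χ (∑ j ∈ T, a j) * Wf f (cT T))
          = (if cT T0 + cT T = 0 then (2:ℂ)^n else 0) * Wf f (cT T) := by
        intro T _
        rw [← orth (cT T0 + cT T), Finset.sum_mul]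
        refine Finset.sum_congr rfl fun a _ => ?_
        rw [dotp_add_left, chi_add, dotp_cT, dotp_cT, mul_assoc]
      rw [Finset.sum_congr rfl hterm]
      rw [Finset.sum_eq_single_of_mem T0 (Finset.mem_powerset.mpr hT0S)]
      · have hself : cT T0 + cT T0 = 0 := funext fun j => CharTwo.add_self_eq_zero _
        rw [if_pos hself]
      · intro T _ hTne
        rw [if_neg, zero_mul]
        intro h0
        have hvw : ∀ v w : ZMod 2, v + w = 0 → v = w := by decide
        have hEq : cT T0 = cT T := by
          funext j
          have hj := congrFun h0 j
          rw [Pi.add_apply, Pi.zero_apply] at hj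
          exact hvw _ _ hj
        exact hTne (cT_inj hEq).symm
    rw [hsum, hRHS] at hLHS
    have h2n : ((2:ℂ)^n) ≠ 0 := pow_ne_zero _ two_ne_zero
    rw [hcTu] at hLHS
    exact (mul_eq_zero.mp hLHS.symm).resolve_left h2n
  · -- Walsh vanishing → CI
    intro h S hScard a α
    have hm := master f S a α
    have hvanish : ∀ T ∈ S.powerset, T ≠ ∅ → Wf f (cT T) = 0 := by
      intro T hT hTne
      have hne : T.Nonempty := Finset.nonempty_of_ne_empty hTne
      have h1 : 1 ≤ wt (cT T) := by
        rw [wt_cT]; exact Finset.card_pos.mpr hne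
      have h2 : wt (cT T) ≤ t := by
        rw [wt_cT, ← hScard]; exact Finset.card_le_card (Finset.mem_powerset.mp hT)
      rw [hWf]; exact h (cT T) h1 h2
    have hsum : ∑ T ∈ S.powerset, χ (∑ j ∈ T, a j) * Wf f (cT T) = Wf f 0 := by
      rw [Finset.sum_eq_single_of_mem (∅ : Finset (Fin n)) (Finset.empty_mem_powerset S)]
      · have h0 : cT (∅ : Finset (Fin n)) = 0 := funext fun j => by simp [cT]
        simp [h0, chi_zero]
      · intro T hT hTne
        rw [hvanish T hT hTne, mul_zero]
    rw [hsum, hScard, ← secondary f α] at hm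
    have hfin : (2:ℂ) * ((2:ℂ)^t *
        (Nat.card {x : Fin n → ZMod 2 // f x = α ∧ ∀ j ∈ S, x j = a j} : ℂ))
        = (2:ℂ) * (Nat.card {x : Fin n → ZMod 2 // f x = α} : ℂ) := by
      rw [← hm, pow_succ]; ring
    have := mul_left_cancel₀ (two_ne_zero) hfin
    exact_mod_cast this
end
end
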